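/- Let q > 0. There is no twice differentiable function f : ℝ → ℝ with f(t) > 0 for all t ∈ ℝ satisfying f''(t) = q · coth(f(t)) · (1 + f'(t)²) for all t ∈ ℝ. In other words, every solution of this ODE has a bounded maximal interval of existence. -/

import Mathlib

/-! Since `coth f ≥ 1` for `f > 0`, the slope `u = f'` satisfies the Riccati inequality
`u' ≥ q (1 + u²)`, i.e. `(arctan u)' ≥ q`. So `arctan u` would increase by at least `π` on an
interval of length `π / q`, whereas it takes values in `(-π/2, π/2)`. -/

open Real

lemma one_le_cosh_div_sinh {x : ℝ} (hx : 0 < x) : 1 ≤ cosh x / sinh x := by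
  rw [one_le_div (sinh_pos_iff.2 hx)]
  exact (sinh_lt_cosh x).le

lemma monotone_arctan_sub_mul {u u' : ℝ → ℝ} {q : ℝ} (hu : ∀ t, HasDerivAt u (u' t) t)
    (hriccati : ∀ t, q * (1 + u t ^ 2) ≤ u' t) :
    Monotone fun t => arctan (u t) - q * t := by
  have hderiv : ∀ t, HasDerivAt (fun t => arctan (u t) - q * t)
      (1 / (1 + u t ^ 2) * u' t - q * 1) t := fun t =>
    (hu t).arctan.sub ((hasDerivAt_id t).const_mul q)
  refine monotone_of_deriv_nonneg (fun t => (hderiv t).differentiableAt) fun t => ?_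
  rw [(hderiv t).deriv, mul_one, one_div_mul_eq_div, sub_nonneg, le_div_iff₀ (by positivity)]
  exact hriccati t

lemma not_exists_hasDerivAt_mul_one_add_sq_le {q : ℝ} (hq : 0 < q) :
    ¬ ∃ u u' : ℝ → ℝ, (∀ t, HasDerivAt u (u' t) t) ∧ ∀ t, q * (1 + u t ^ 2) ≤ u' t := by
  rintro ⟨u, u', hu, hriccati⟩
  have hgain := monotone_arctan_sub_mul hu hriccati (div_pos pi_pos hq).le
  simp only [mul_zero, sub_zero, mul_div_cancel₀ π hq.ne'] at hgain
  linarith [arctan_lt_pi_div_two (u (π / q)), neg_pi_div_two_lt_arctan (u 0)]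

theorem stmt_4 (q : ℝ) (hq : 0 < q) :
    ¬ ∃ f f' f'' : ℝ → ℝ,
        (∀ t, 0 < f t) ∧
        (∀ t, HasDerivAt f (f' t) t) ∧
        (∀ t, HasDerivAt f' (f'' t) t) ∧
        (∀ t, f'' t = q * (Real.cosh (f t) / Real.sinh (f t)) * (1 + f' t ^ 2)) := by
  rintro ⟨f, f', f'', hpos, -, hf', hode⟩
  refine not_exists_hasDerivAt_mul_one_add_sq_le hq ⟨f', f'', hf', fun t => ?_⟩
  rw [hode t, mul_right_comm]
  exact le_mul_of_one_le_right (by positivity) (one_le_cosh_div_sinh (hpos t))
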